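/- For every integer n ≥ 1, the number of Catalan words of length n avoiding the vincular pattern 12-1 equals 2^{n−1}, the number avoiding 12-3 equals 2^{n−1}, and the number avoiding 12-2 equals binom(n,2) + 1. -/

import Mathlib

/-- A Catalan word: a word of positive integers starting with 1 in which each
letter exceeds its predecessor by at most 1. -/
def IsCatalanWord {n : ℕ} (w : Fin n → ℕ) : Prop :=
  (∀ i, 1 ≤ w i) ∧ (∀ h : 0 < n, w ⟨0, h⟩ = 1) ∧
  ∀ i : ℕ, ∀ h : i + 1 < n, w ⟨i + 1, h⟩ ≤ w ⟨i, by omega⟩ + 1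

/-- `w` contains the vincular pattern 12-1: there are indices `i` and `k` with
`i + 1 < k`, `w i < w (i+1)` and `w k = w i`. -/
def Contains12_1 {n : ℕ} (w : Fin n → ℕ) : Prop :=
  ∃ i k : ℕ, ∃ hk : k < n, ∃ hik : i + 1 < k,
    w ⟨i, by omega⟩ < w ⟨i + 1, by omega⟩ ∧ w ⟨k, hk⟩ = w ⟨i, by omega⟩

/-- `w` contains the vincular pattern 12-2: there are indices `i` and `k` with
`i + 1 < k` and `w i < w (i+1) = w k`. -/
def Contains12_2 {n : ℕ} (w : Fin n → ℕ) : Prop :=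
  ∃ i k : ℕ, ∃ hk : k < n, ∃ hik : i + 1 < k,
    w ⟨i, by omega⟩ < w ⟨i + 1, by omega⟩ ∧ w ⟨i + 1, by omega⟩ = w ⟨k, hk⟩

/-- `w` contains the vincular pattern 12-3: there are indices `i` and `k` with
`i + 1 < k` and `w i < w (i+1) < w k`. -/
def Contains12_3 {n : ℕ} (w : Fin n → ℕ) : Prop :=
  ∃ i k : ℕ, ∃ hk : k < n, ∃ hik : i + 1 < k,
    w ⟨i, by omega⟩ < w ⟨i + 1, by omega⟩ ∧ w ⟨i + 1, by omega⟩ < w ⟨k, hk⟩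

/-!
Every value `v ≥ 2` of a Catalan word is first reached by an ascent `(v - 1, v)`. Hence a Catalan
word avoiding 12-1 never descends, and one avoiding 12-3 only uses the letters 1 and 2: in both
cases the word is a walk from 1 with exactly two choices for each of the `n - 1` later letters.
A Catalan word avoiding 12-2 can only step up by one or drop back to 1, and the letter 2 occurs in
it at most once; so it is either constant or `1 ⋯ 1 2 3 ⋯ k 1 ⋯ 1`, which is determined by the
positions `a < b` of its last leading 1 and of its largest letter.
-/

section Walks

variable {α : Type*} (F : α → Finset α)

def walksFrom (a : α) (m : ℕ) : Set (Fin (m + 1) → α) :=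
  {w | w 0 = a ∧ ∀ i : Fin m, w i.succ ∈ F (w i.castSucc)}

lemma walksFrom_zero (a : α) : walksFrom F a 0 = {fun _ => a} := by
  ext w
  simp only [walksFrom, Set.mem_ofPred_eq, Set.mem_singleton_iff, IsEmpty.forall_iff, and_true]
  exact ⟨fun h => funext fun i => Fin.fin_one_eq_zero i ▸ h, fun h => h ▸ rfl⟩

lemma walksFrom_succ (a : α) (m : ℕ) :
    walksFrom F a (m + 1) = ⋃ b ∈ (F a : Set α), Fin.cons a '' walksFrom F b m := by
  ext w
  simp only [walksFrom, Set.mem_ofPred_eq, Set.mem_iUnion, Set.mem_image, Finset.mem_coe,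
    exists_prop]
  constructor
  · rintro ⟨h0, hstep⟩
    refine ⟨w 1, by simpa [h0] using hstep 0, Fin.tail w, ⟨rfl, fun i => ?_⟩, ?_⟩
    · exact hstep i.succ
    · rw [← h0]; exact Fin.cons_self_tail w
  · rintro ⟨b, hb, v, ⟨hv0, hv⟩, rfl⟩
    refine ⟨rfl, Fin.cases ?_ (fun i => ?_)⟩
    · simpa [hv0] using hb
    · exact hv i

lemma encard_walksFrom {k : ℕ} (hF : ∀ x, (F x).card = k) (a : α) (m : ℕ) :
    (walksFrom F a m).encard = k ^ m := by
  induction m generalizing a with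
  | zero => simp [walksFrom_zero]
  | succ m ih =>
    have hdisj : (F a : Set α).PairwiseDisjoint
        (fun b => Fin.cons a '' walksFrom F b m : α → Set (Fin (m + 2) → α)) := by
      rintro b - c - hbc
      refine Set.disjoint_left.2 ?_
      rintro _ ⟨v, hv, rfl⟩ ⟨u, hu, huv⟩
      have h1 := congrFun huv 1
      simp only [Fin.cons_one, hu.1, hv.1] at h1
      exact hbc h1.symm
    rw [walksFrom_succ, (F a).finite_toSet.encard_biUnion hdisj, finsum_mem_coe_finset]
    simp_rw [(Fin.cons_right_injective (α := fun _ : Fin (m + 2) => α) a).encard_image, ih]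
    simp [hF, pow_succ, mul_comm]

lemma ncard_walksFrom {k : ℕ} (hF : ∀ x, (F x).card = k) (a : α) (m : ℕ) :
    (walksFrom F a m).ncard = k ^ m := by
  rw [Set.ncard_def, encard_walksFrom F hF, ← Nat.cast_pow, ENat.toNat_natCast]

lemma mem_walksFrom_iff (a : α) (m : ℕ) (W : ℕ → α) :
    (fun j : Fin (m + 1) => W j) ∈ walksFrom F a m ↔
      W 0 = a ∧ ∀ j, j + 1 < m + 1 → W (j + 1) ∈ F (W j) := by
  simp [walksFrom, Fin.forall_iff]

end Walks

section CatalanWords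

variable {n : ℕ} {W : ℕ → ℕ}

lemma exists_ascent_between (hstep : ∀ j, j + 1 < n → W (j + 1) ≤ W j + 1) {p j v : ℕ}
    (hp : W p ≤ v) (hpj : p ≤ j) (hj : j < n) (hv : v + 1 ≤ W j) :
    ∃ i, p ≤ i ∧ i < j ∧ W i = v ∧ W (i + 1) = v + 1 := by
  induction j, hpj using Nat.le_induction with
  | base => omega
  | succ j hpj ih =>
    by_cases h : v + 1 ≤ W j
    · obtain ⟨i, hpi, hij, hi⟩ := ih (by omega) h
      exact ⟨i, hpi, by omega, hi⟩
    · have := hstep j hj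
      exact ⟨j, hpj, by omega, by omega, by omega⟩

lemma exists_nat_seq_eq (w : Fin n → ℕ) : ∃ W : ℕ → ℕ, w = fun j : Fin n => W j :=
  ⟨fun j => if h : j < n then w ⟨j, h⟩ else 0, by simp⟩

lemma isCatalanWord_iff : IsCatalanWord (fun j : Fin n => W j) ↔
    (∀ j < n, 1 ≤ W j) ∧ (0 < n → W 0 = 1) ∧ ∀ j, j + 1 < n → W (j + 1) ≤ W j + 1 := by
  simp [IsCatalanWord, Fin.forall_iff]

lemma contains12_1_iff : Contains12_1 (fun j : Fin n => W j) ↔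
    ∃ i k, k < n ∧ i + 1 < k ∧ W i < W (i + 1) ∧ W k = W i := by
  simp only [Contains12_1, exists_prop]

lemma contains12_2_iff : Contains12_2 (fun j : Fin n => W j) ↔
    ∃ i k, k < n ∧ i + 1 < k ∧ W i < W (i + 1) ∧ W (i + 1) = W k := by
  simp only [Contains12_2, exists_prop]

lemma contains12_3_iff : Contains12_3 (fun j : Fin n => W j) ↔
    ∃ i k, k < n ∧ i + 1 < k ∧ W i < W (i + 1) ∧ W (i + 1) < W k := by
  simp only [Contains12_3, exists_prop]

lemma le_succ_of_not_contains12_1 (hw : IsCatalanWord (fun j : Fin n => W j))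
    (hav : ¬ Contains12_1 (fun j : Fin n => W j)) {j : ℕ} (hj : j + 1 < n) :
    W j ≤ W (j + 1) := by
  by_contra! h
  have h0 : W 0 = 1 := hw.2.1 (by omega)
  have hpos : 1 ≤ W (j + 1) := hw.1 ⟨j + 1, hj⟩
  obtain ⟨i, -, hij, hi, hi1⟩ := exists_ascent_between hw.2.2 (p := 0) (v := W (j + 1))
    (by omega) (Nat.zero_le j) (by omega) (by omega)
  exact hav (contains12_1_iff.2 ⟨i, j + 1, hj, by omega, by omega, hi.symm⟩)

lemma le_two_of_not_contains12_3 (hw : IsCatalanWord (fun j : Fin n => W j))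
    (hav : ¬ Contains12_3 (fun j : Fin n => W j)) {k : ℕ} (hk : k < n) : W k ≤ 2 := by
  by_contra! h
  have h0 : W 0 = 1 := hw.2.1 (by omega)
  obtain ⟨i, -, hik, hi, hi1⟩ := exists_ascent_between hw.2.2 (p := 0) (v := 1)
    h0.le (Nat.zero_le k) hk (by omega)
  have hik' : i + 1 ≠ k := by rintro rfl; omega
  exact hav (contains12_3_iff.2 ⟨i, k, hk, by omega, by omega, by omega⟩)

lemma succ_eq_add_one_or_one_of_not_contains12_2 (hw : IsCatalanWord (fun j : Fin n => W j))
    (hav : ¬ Contains12_2 (fun j : Fin n => W j)) {j : ℕ} (hj : j + 1 < n) :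
    W (j + 1) = W j + 1 ∨ W (j + 1) = 1 := by
  by_contra! h
  have h0 : W 0 = 1 := hw.2.1 (by omega)
  have hpos : 1 ≤ W (j + 1) := hw.1 ⟨j + 1, hj⟩
  have hstep : W (j + 1) ≤ W j + 1 := hw.2.2 j hj
  obtain ⟨i, -, hij, hi, hi1⟩ := exists_ascent_between hw.2.2 (p := 0) (v := W (j + 1) - 1)
    (by omega) (Nat.zero_le j) (by omega) (by omega)
  exact hav (contains12_2_iff.2 ⟨i, j + 1, hj, by omega, by omega, by omega⟩)

lemma ne_two_of_not_contains12_2 (hw : IsCatalanWord (fun j : Fin n => W j))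
    (hav : ¬ Contains12_2 (fun j : Fin n => W j)) {j k : ℕ} (hjk : j < k) (hk : k < n)
    (hj : W j = 2) : W k ≠ 2 := by
  intro hk2
  have h0 : W 0 = 1 := hw.2.1 (by omega)
  obtain ⟨i, -, hij, hi, hi1⟩ := exists_ascent_between hw.2.2 (p := 0) (v := 1)
    h0.le (Nat.zero_le j) (by omega) (by omega)
  exact hav (contains12_2_iff.2 ⟨i, k, hk, by omega, by omega, by omega⟩)

lemma isCatalanWord_and_not_contains12_1_iff (hn : 0 < n) :
    IsCatalanWord (fun j : Fin n => W j) ∧ ¬ Contains12_1 (fun j : Fin n => W j) ↔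
      W 0 = 1 ∧ ∀ j, j + 1 < n → W (j + 1) ∈ ({W j, W j + 1} : Finset ℕ) := by
  simp only [Finset.mem_insert, Finset.mem_singleton]
  constructor
  · rintro ⟨hw, hav⟩
    refine ⟨hw.2.1 hn, fun j hj => ?_⟩
    have hle : W (j + 1) ≤ W j + 1 := hw.2.2 j hj
    have := le_succ_of_not_contains12_1 hw hav hj
    omega
  · rintro ⟨h0, hstep⟩
    have hmono : MonotoneOn W (Set.Iio n) :=
      monotoneOn_of_le_succ Set.ordConnected_Iio fun j _ _ hj => by
        rw [Order.succ_eq_add_one, Set.mem_Iio] at hj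
        rw [Order.succ_eq_add_one]
        have := hstep j hj
        omega
    rw [isCatalanWord_iff, contains12_1_iff]
    refine ⟨⟨fun j hj => h0 ▸ hmono hn hj (Nat.zero_le j), fun _ => h0, fun j hj => ?_⟩, ?_⟩
    · have := hstep j hj
      omega
    · rintro ⟨i, k, hk, hik, hlt, heq⟩
      have := hmono (Set.mem_Iio.2 (by omega : i + 1 < n)) hk hik.le
      omega

lemma isCatalanWord_and_not_contains12_3_iff (hn : 0 < n) :
    IsCatalanWord (fun j : Fin n => W j) ∧ ¬ Contains12_3 (fun j : Fin n => W j) ↔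
      W 0 = 1 ∧ ∀ j, j + 1 < n → W (j + 1) ∈ ({1, 2} : Finset ℕ) := by
  simp only [Finset.mem_insert, Finset.mem_singleton]
  constructor
  · rintro ⟨hw, hav⟩
    refine ⟨hw.2.1 hn, fun j hj => ?_⟩
    have hpos : 1 ≤ W (j + 1) := hw.1 ⟨j + 1, hj⟩
    have := le_two_of_not_contains12_3 hw hav hj
    omega
  · rintro ⟨h0, hstep⟩
    have hval : ∀ j < n, 1 ≤ W j ∧ W j ≤ 2 := by
      rintro (_ | j) hj
      · omega
      · have := hstep j hj
        omega
    rw [isCatalanWord_iff, contains12_3_iff]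
    refine ⟨⟨fun j hj => (hval j hj).1, fun _ => h0, fun j hj => ?_⟩, ?_⟩
    · have := hval j (by omega)
      have := hval (j + 1) hj
      omega
    · rintro ⟨i, k, hk, hik, hlt, hlt'⟩
      have := hval i (by omega)
      have := hval (i + 1) (by omega)
      have := hval k hk
      omega

lemma setOf_catalan_not_contains12_1 (m : ℕ) :
    {w : Fin (m + 1) → ℕ | IsCatalanWord w ∧ ¬ Contains12_1 w} =
      walksFrom (fun x => {x, x + 1}) 1 m := by
  ext w
  obtain ⟨W, rfl⟩ := exists_nat_seq_eq w
  rw [mem_walksFrom_iff]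
  exact isCatalanWord_and_not_contains12_1_iff m.succ_pos

lemma setOf_catalan_not_contains12_3 (m : ℕ) :
    {w : Fin (m + 1) → ℕ | IsCatalanWord w ∧ ¬ Contains12_3 w} =
      walksFrom (fun _ => {1, 2}) 1 m := by
  ext w
  obtain ⟨W, rfl⟩ := exists_nat_seq_eq w
  rw [mem_walksFrom_iff]
  exact isCatalanWord_and_not_contains12_3_iff m.succ_pos

lemma ncard_setOf_catalan_not_contains12_1 (m : ℕ) :
    {w : Fin (m + 1) → ℕ | IsCatalanWord w ∧ ¬ Contains12_1 w}.ncard = 2 ^ m := by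
  rw [setOf_catalan_not_contains12_1, ncard_walksFrom _ (fun x => Finset.card_pair (by omega))]

lemma ncard_setOf_catalan_not_contains12_3 (m : ℕ) :
    {w : Fin (m + 1) → ℕ | IsCatalanWord w ∧ ¬ Contains12_3 w}.ncard = 2 ^ m := by
  rw [setOf_catalan_not_contains12_3, ncard_walksFrom _ (fun _ => Finset.card_pair (by omega))]

end CatalanWords

def runWord (a b j : ℕ) : ℕ := if a < j ∧ j ≤ b then j - a + 1 else 1

section RunWords

variable {n : ℕ} {W : ℕ → ℕ}

lemma eq_sub_add_one_of_forall_ne_one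
    (hstep : ∀ j, j + 1 < n → W (j + 1) = W j + 1 ∨ W (j + 1) = 1) {a b : ℕ} (hbn : b < n)
    (ha : W (a + 1) = 2) (hne : ∀ j, a < j → j ≤ b → W j ≠ 1) {j : ℕ} (haj : a < j)
    (hjb : j ≤ b) : W j = j - a + 1 := by
  induction j, haj using Nat.le_induction with
  | base => simpa using ha
  | succ j haj ih =>
    have := hne (j + 1) (by omega) hjb
    have := hstep j (by omega)
    have := ih (by omega)
    omega

lemma eq_one_of_lt_of_succ_eq_one
    (hstep : ∀ j, j + 1 < n → W (j + 1) = W j + 1 ∨ W (j + 1) = 1)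
    (htwo : ∀ j k, j < k → k < n → W j = 2 → W k ≠ 2) {a b : ℕ} (ha : W (a + 1) = 2)
    (hab : a < b) (hb : W (b + 1) = 1) {j : ℕ} (hbj : b < j) (hjn : j < n) : W j = 1 := by
  induction j, hbj using Nat.le_induction with
  | base => exact hb
  | succ j hbj ih =>
    have := htwo (a + 1) (j + 1) (by omega) hjn ha
    have := hstep j hjn
    have := ih (by omega)
    omega

lemma eq_one_or_exists_eq_runWord
    (hstep : ∀ j, j + 1 < n → W (j + 1) = W j + 1 ∨ W (j + 1) = 1) (h0 : W 0 = 1)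
    (htwo : ∀ j k, j < k → k < n → W j = 2 → W k ≠ 2) :
    (∀ j < n, W j = 1) ∨ ∃ a b, a < b ∧ b < n ∧ ∀ j < n, W j = runWord a b j := by
  by_cases! hone : ∀ j < n, W j = 1
  · exact Or.inl hone
  right
  have hstart : ∃ j, j < n ∧ W j ≠ 1 := hone
  obtain ⟨a, ha⟩ : ∃ a, Nat.find hstart = a + 1 :=
    Nat.exists_eq_add_one_of_ne_zero fun h => (Nat.find_spec hstart).2 (h ▸ h0)
  have han : a + 1 < n := ha ▸ (Nat.find_spec hstart).1
  have hlead : ∀ j ≤ a, W j = 1 := fun j hj =>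
    not_not.1 fun h => Nat.find_min hstart (by omega : j < Nat.find hstart) ⟨by omega, h⟩
  have ha1 : W (a + 1) = 2 := by
    have := ha ▸ (Nat.find_spec hstart).2
    have := hlead a le_rfl
    have := hstep a han
    omega
  -- the run ends just before the first return to 1, or at the end of the word
  have hend : ∃ j, a + 1 < j ∧ (j = n ∨ W j = 1) := ⟨n, by omega, Or.inl rfl⟩
  obtain ⟨b, hb⟩ : ∃ b, Nat.find hend = b + 1 :=
    Nat.exists_eq_add_one_of_ne_zero fun h => by have := (Nat.find_spec hend).1; omega
  have hb_spec := hb ▸ Nat.find_spec hend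
  have hbn : b < n := by have := Nat.find_min' hend ⟨by omega, Or.inl rfl⟩; omega
  have hne : ∀ j, a < j → j ≤ b → W j ≠ 1 := fun j haj hjb h =>
    if hj : j = a + 1 then by subst hj; omega
    else Nat.find_min hend (by omega : j < Nat.find hend) ⟨by omega, Or.inr h⟩
  refine ⟨a, b, by omega, hbn, fun j hj => ?_⟩
  unfold runWord
  split_ifs with h
  · exact eq_sub_add_one_of_forall_ne_one hstep hbn ha1 hne h.1 h.2
  · by_cases hja : j ≤ a
    · exact hlead j hja
    · exact eq_one_of_lt_of_succ_eq_one hstep htwo (b := b) ha1 (by omega) (by omega) (by omega) hj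

lemma isCatalanWord_runWord (a b : ℕ) : IsCatalanWord (fun j : Fin n => runWord a b j) := by
  rw [isCatalanWord_iff]
  refine ⟨fun j _ => ?_, fun _ => ?_, fun j _ => ?_⟩ <;> unfold runWord <;> split_ifs <;> omega

lemma not_contains12_2_runWord (a b : ℕ) : ¬ Contains12_2 (fun j : Fin n => runWord a b j) := by
  rw [contains12_2_iff]
  rintro ⟨i, k, -, hik, hlt, heq⟩
  unfold runWord at hlt heq
  split_ifs at hlt heq <;> omega

def ltPairs (n : ℕ) : Finset (ℕ × ℕ) := {p ∈ Finset.range n ×ˢ Finset.range n | p.1 < p.2}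

lemma mem_ltPairs {p : ℕ × ℕ} : p ∈ ltPairs n ↔ p.1 < p.2 ∧ p.2 < n := by
  simp only [ltPairs, Finset.mem_filter, Finset.mem_product, Finset.mem_range]
  omega

lemma card_ltPairs (n : ℕ) : (ltPairs n).card = n.choose 2 := by
  rw [ltPairs, Finset.card_product_filter_lt, Finset.card_range]

lemma runWord_injOn :
    Set.InjOn (fun p : ℕ × ℕ => fun j : Fin n => runWord p.1 p.2 j) (ltPairs n) := by
  rintro ⟨a, b⟩ hp ⟨a', b'⟩ hp' h
  obtain ⟨hab, hbn⟩ := mem_ltPairs.1 hp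
  obtain ⟨hab', hbn'⟩ := mem_ltPairs.1 hp'
  have h1 := congrFun h ⟨a + 1, by omega⟩
  have h2 := congrFun h ⟨a' + 1, by omega⟩
  have h3 := congrFun h ⟨b, hbn⟩
  have h4 := congrFun h ⟨b', hbn'⟩
  simp only [runWord] at h1 h2 h3 h4
  simp only [Prod.mk.injEq]
  split_ifs at h1 h2 h3 h4 <;> omega

lemma setOf_catalan_not_contains12_2 (hn : 0 < n) :
    {w : Fin n → ℕ | IsCatalanWord w ∧ ¬ Contains12_2 w} =
      insert (fun _ => 1) ((fun p : ℕ × ℕ => fun j : Fin n => runWord p.1 p.2 j) '' ltPairs n) := by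
  ext w
  obtain ⟨W, rfl⟩ := exists_nat_seq_eq w
  simp only [Set.mem_ofPred_eq, Set.mem_insert_iff, Set.mem_image, Finset.mem_coe, mem_ltPairs]
  constructor
  · rintro ⟨hw, hav⟩
    rcases eq_one_or_exists_eq_runWord
        (fun j hj => succ_eq_add_one_or_one_of_not_contains12_2 hw hav hj) (hw.2.1 hn)
        (fun j k hjk hk hj => ne_two_of_not_contains12_2 hw hav hjk hk hj) with
      hone | ⟨a, b, hab, hbn, hrun⟩
    · exact Or.inl (funext fun j => hone j j.2)
    · exact Or.inr ⟨(a, b), ⟨hab, hbn⟩, funext fun j => (hrun j j.2).symm⟩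
  · have hone : (fun _ : Fin n => 1) = fun j : Fin n => runWord 0 0 j := by
      funext j
      simp [runWord]
    rintro (h | ⟨p, -, h⟩)
    · rw [h, hone]
      exact ⟨isCatalanWord_runWord 0 0, not_contains12_2_runWord 0 0⟩
    · rw [← h]
      exact ⟨isCatalanWord_runWord _ _, not_contains12_2_runWord _ _⟩

lemma ncard_setOf_catalan_not_contains12_2 (hn : 0 < n) :
    {w : Fin n → ℕ | IsCatalanWord w ∧ ¬ Contains12_2 w}.ncard = n.choose 2 + 1 := by
  have hnotMem : (fun _ => 1) ∉
      (fun p : ℕ × ℕ => fun j : Fin n => runWord p.1 p.2 j) '' ltPairs n := by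
    rintro ⟨⟨a, b⟩, hp, h⟩
    obtain ⟨hab, hbn⟩ := mem_ltPairs.1 hp
    have := congrFun h ⟨a + 1, by omega⟩
    simp only [runWord] at this
    split_ifs at this <;> omega
  rw [setOf_catalan_not_contains12_2 hn, Set.ncard_insert_of_notMem hnotMem,
    runWord_injOn.ncard_image, Set.ncard_coe_finset, card_ltPairs]

end RunWords

theorem catalan_avoid_12_1_12_3_12_2 (n : ℕ) (hn : 1 ≤ n) :
    Set.ncard {w : Fin n → ℕ | IsCatalanWord w ∧ ¬ Contains12_1 w} = 2 ^ (n - 1) ∧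
    Set.ncard {w : Fin n → ℕ | IsCatalanWord w ∧ ¬ Contains12_3 w} = 2 ^ (n - 1) ∧
    Set.ncard {w : Fin n → ℕ | IsCatalanWord w ∧ ¬ Contains12_2 w} =
      Nat.choose n 2 + 1 := by
  obtain ⟨m, rfl⟩ : ∃ m, n = m + 1 := ⟨n - 1, by omega⟩
  exact ⟨ncard_setOf_catalan_not_contains12_1 m, ncard_setOf_catalan_not_contains12_3 m,
    ncard_setOf_catalan_not_contains12_2 m.succ_pos⟩
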